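/- Let (A, p, 0, ½, 1) be a mobi algebra with derived operations a·b = p(0,a,b), a⊕b = p(a,½,b), and a∘b = p(a,b,1). Then for all a, b ∈ A: (a∘b) ⊕ (b·a) = b ⊕ a. -/

import Mathlib

/-- A mobi algebra: a set with a ternary operation `p` and constants `e0`, `half`, `e1`. -/
structure MobiAlgebra (A : Type*) where
  p : A → A → A → A
  e0 : A
  half : A
  e1 : A
  A1 : p e1 half e0 = half
  A2 : ∀ a, p e0 a e1 = a
  A3 : ∀ a b, p a b a = a
  A4 : ∀ a b, p a e0 b = a
  A5 : ∀ a b, p a e1 b = b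
  A6 : ∀ a a' b, p a half b = p a' half b → a = a'
  A7 : ∀ a b c1 c2 c3, p a (p c1 c2 c3) b = p (p a c1 b) c2 (p a c3 b)
  A8 : ∀ a1 a2 b1 b2 c,
    p (p a1 c b1) half (p a2 c b2) = p (p a1 half a2) c (p b1 half b2)

/-! Since `½ = p(1,½,0)`, distributivity (A7) makes `⊕` commutative. Feeding this into the
medial law (A8) lets the first arguments of the two summands be exchanged, which turns
`(a∘b) ⊕ (b·a)` into `(0∘b) ⊕ p(a,b,a) = b ⊕ a`. -/

namespace MobiAlgebra

variable {A : Type*} (M : MobiAlgebra A)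

theorem p_half_comm (x y : A) : M.p x M.half y = M.p y M.half x := by
  calc M.p x M.half y = M.p x (M.p M.e1 M.half M.e0) y := by rw [M.A1]
    _ = M.p (M.p x M.e1 y) M.half (M.p x M.e0 y) := M.A7 ..
    _ = M.p y M.half x := by rw [M.A5, M.A4]

theorem p_half_exchange (a1 a2 b1 b2 c : A) :
    M.p (M.p a1 c b1) M.half (M.p a2 c b2) = M.p (M.p a2 c b1) M.half (M.p a1 c b2) := by
  rw [M.A8, M.A8, M.p_half_comm a1]

end MobiAlgebra

/-- In a mobi algebra, with a·b = p(0,a,b), a⊕b = p(a,½,b), a∘b = p(a,b,1):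
(a∘b) ⊕ (b·a) = b ⊕ a. -/
theorem mobi_circ_oplus_mul {A : Type*} (M : MobiAlgebra A) (a b : A) :
    M.p (M.p a b M.e1) M.half (M.p M.e0 b a) = M.p b M.half a := by
  rw [M.p_half_exchange, M.A2, M.A3]
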